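/- arXiv:0912.5259 — 2 statements merged into one kernel-verified Lean document; each statement's English description precedes it below -/
import Mathlib

section
/- Let K be any field, b ∈ K^×, and let σ be the K-automorphism of K(x,y) of order 3 defined by σ(x) = y, σ(y) = b/(xy). Then the fixed field K(x,y)^⟨σ⟩ equals K(ũ, ṽ), where ũ = y(y³x³ + bx³ − 3byx² + b²)/(y²x⁴ − y³x³ + y⁴x² − byx² − by²x + b²) and ṽ = x(x³y³ + by³ − 3bxy² + b²)/(y²x⁴ − y³x³ + y⁴x² − byx² − by²x + b²). -/
/-!
Put z = b/(xy). Then σ permutes x ↦ y ↦ z ↦ x, so σ³ fixes the generators x, y of F, σ has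
order 3 and [F : F^σ] = 3 by Artin's theorem. When xyz = b, the substitution (x, y) ↦ (y, z)
multiplies the numerators and the common denominator of ũ and ṽ by (z/x)², so ũ and ṽ are
σ-invariant and K(ũ, ṽ) ⊆ F^σ.

For the reverse inclusion put w = ũ² - ũṽ + ṽ². A direct computation gives
w - xṽ = y(ũ - x); the same identity for the pair (z, x), at which ũ, ṽ, w take the same
values, gives w - xũ = z(ṽ - x). The first puts y in K(ũ, ṽ)(x), and multiplying the two shows
that x is a root of the nonzero cubic T(w - ṽT)(w - ũT) - b(ũ - T)(ṽ - T) over K(ũ, ṽ).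
Hence [F : K(ũ, ṽ)] ≤ 3 = [F : F^σ].
-/

open IntermediateField

section TwistedFormulas

variable {R : Type*} [CommRing R]

def twistedNum (b x y : R) : R := y * (y ^ 3 * x ^ 3 + b * x ^ 3 - 3 * (b * y * x ^ 2) + b ^ 2)

def twistedDen (b x y : R) : R :=
  y ^ 2 * x ^ 4 - y ^ 3 * x ^ 3 + y ^ 4 * x ^ 2 - b * y * x ^ 2 - b * y ^ 2 * x + b ^ 2

theorem map_twistedNum {S G : Type*} [CommRing S] [FunLike G R S] [RingHomClass G R S] (f : G)
    (b x y : R) : f (twistedNum b x y) = twistedNum (f b) (f x) (f y) := by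
  simp [twistedNum, map_ofNat]

theorem map_twistedDen {S G : Type*} [CommRing S] [FunLike G R S] [RingHomClass G R S] (f : G)
    (b x y : R) : f (twistedDen b x y) = twistedDen (f b) (f x) (f y) := by
  simp [twistedDen]

variable {b x y z : R}

theorem twistedNum_rotate (h : x * y * z = b) :
    x ^ 2 * twistedNum b y z = z ^ 2 * twistedNum b x y := by
  subst h; unfold twistedNum; ring

theorem twistedNum_rotate_swap (h : x * y * z = b) :
    x ^ 2 * twistedNum b z y = z ^ 2 * twistedNum b y x := by
  subst h; unfold twistedNum; ring

theorem twistedDen_rotate (h : x * y * z = b) :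
    x ^ 2 * twistedDen b y z = z ^ 2 * twistedDen b x y := by
  subst h; unfold twistedDen; ring

end TwistedFormulas

section TwistedGenerators

variable {F : Type*} [Field F]

def twistedU (b x y : F) : F := twistedNum b x y / twistedDen b x y

def twistedV (b x y : F) : F := twistedNum b y x / twistedDen b x y

def twistedW (b x y : F) : F :=
  twistedU b x y ^ 2 - twistedU b x y * twistedV b x y + twistedV b x y ^ 2

theorem map_twistedU {F' G : Type*} [Field F'] [FunLike G F F'] [RingHomClass G F F'] (f : G)
    (b x y : F) : f (twistedU b x y) = twistedU (f b) (f x) (f y) := by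
  rw [twistedU, twistedU, map_div₀, map_twistedNum, map_twistedDen]

theorem map_twistedV {F' G : Type*} [Field F'] [FunLike G F F'] [RingHomClass G F F'] (f : G)
    (b x y : F) : f (twistedV b x y) = twistedV (f b) (f x) (f y) := by
  rw [twistedV, twistedV, map_div₀, map_twistedNum, map_twistedDen]

variable {b x y z : F}

theorem twistedU_rotate (h : x * y * z = b) (hx : x ≠ 0) (hz : z ≠ 0) :
    twistedU b y z = twistedU b x y := by
  rw [twistedU, twistedU, ← mul_div_mul_left _ _ (pow_ne_zero 2 hx), twistedNum_rotate h,
    twistedDen_rotate h, mul_div_mul_left _ _ (pow_ne_zero 2 hz)]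

theorem twistedV_rotate (h : x * y * z = b) (hx : x ≠ 0) (hz : z ≠ 0) :
    twistedV b y z = twistedV b x y := by
  rw [twistedV, twistedV, ← mul_div_mul_left _ _ (pow_ne_zero 2 hx), twistedNum_rotate_swap h,
    twistedDen_rotate h, mul_div_mul_left _ _ (pow_ne_zero 2 hz)]

theorem twistedW_rotate (h : x * y * z = b) (hx : x ≠ 0) (hz : z ≠ 0) :
    twistedW b y z = twistedW b x y := by
  rw [twistedW, twistedW, twistedU_rotate h hx hz, twistedV_rotate h hx hz]

theorem twistedDen_rotate_ne_zero (h : x * y * z = b) (hz : z ≠ 0)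
    (hD : twistedDen b x y ≠ 0) : twistedDen b y z ≠ 0 :=
  fun hD' => hD <| by simpa [hD', hz] using (twistedDen_rotate h).symm

theorem twistedW_eq (hD : twistedDen b x y ≠ 0) :
    twistedW b x y = y * twistedU b x y + x * twistedV b x y - x * y := by
  rw [twistedW, twistedU, twistedV]
  field_simp
  unfold twistedNum twistedDen
  ring

theorem twisted_cubic (hx : x ≠ 0) (hy : y ≠ 0) (hb : b ≠ 0) (hD : twistedDen b x y ≠ 0) :
    x * (twistedW b x y - x * twistedV b x y) * (twistedW b x y - x * twistedU b x y)
      = b * (twistedU b x y - x) * (twistedV b x y - x) := by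
  set z := b / (x * y)
  have hz : z ≠ 0 := div_ne_zero hb (mul_ne_zero hx hy)
  have hxyz : x * y * z = b := by simp only [z]; field_simp
  have hyzx : y * z * x = b := by rw [← hxyz]; ring
  have hW := twistedW_eq hD
  have hW' := twistedW_eq (twistedDen_rotate_ne_zero hyzx hx (twistedDen_rotate_ne_zero hxyz hz hD))
  rw [twistedW_rotate hyzx hy hx, twistedW_rotate hxyz hx hz, twistedU_rotate hyzx hy hx,
    twistedU_rotate hxyz hx hz, twistedV_rotate hyzx hy hx, twistedV_rotate hxyz hx hz] at hW'
  linear_combination x * (twistedW b x y - x * twistedU b x y) * hW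
    + x * y * (twistedU b x y - x) * hW' + (twistedU b x y - x) * (twistedV b x y - x) * hxyz

end TwistedGenerators

section FixedField

variable {K L : Type*} [Field K] [Field L] [Algebra K L]

theorem mem_fixedField_zpowers_iff (σ : L ≃ₐ[K] L) (a : L) :
    a ∈ fixedField (Subgroup.zpowers σ) ↔ σ a = a := by
  rw [mem_fixedField_iff, Subgroup.forall_mem_zpowers]
  exact MulAction.mem_fixedBy_zpowers_iff_mem_fixedBy (α := L) (g := σ) (a := a)

theorem finrank_fixedField_zpowers (σ : L ≃ₐ[K] L) (hσ : IsOfFinOrder σ) :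
    Module.finrank (fixedField (Subgroup.zpowers σ)) L = orderOf σ := by
  have : Finite (Subgroup.zpowers σ) := hσ.finite_zpowers.to_subtype
  have := Fintype.ofFinite (Subgroup.zpowers σ)
  rw [← Nat.card_zpowers, Nat.card_eq_fintype_card]
  exact FixedPoints.finrank_eq_card (Subgroup.zpowers σ) L

theorem AlgEquiv.eq_one_of_adjoin_eq_top {s : Set L} (hs : adjoin K s = ⊤) (τ : L ≃ₐ[K] L)
    (h : ∀ a ∈ s, τ a = a) : τ = 1 := by
  have hle : adjoin K s ≤ fixedField (Subgroup.zpowers τ) :=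
    adjoin_le_iff.2 fun a ha => (mem_fixedField_zpowers_iff τ a).2 (h a ha)
  ext a
  exact (mem_fixedField_zpowers_iff τ a).1 (hle (hs ▸ mem_top))

theorem eq_of_le_of_adjoin_simple_eq_top {E M : IntermediateField K L} (hle : E ≤ M) {x : L}
    (hx : adjoin E {x} = ⊤) {p : Polynomial E} (hp : p ≠ 0) (hpx : Polynomial.aeval x p = 0)
    (hdeg : p.natDegree ≤ Module.finrank M L) : E = M := by
  have hint : IsIntegral E x := (show IsAlgebraic E x from ⟨p, hp, hpx⟩).isIntegral
  have : FiniteDimensional E L := by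
    have := adjoin.finiteDimensional hint
    rw [hx] at this
    exact topEquiv.toLinearEquiv.finiteDimensional
  refine eq_of_le_of_finrank_le' hle (le_trans ?_ hdeg)
  rw [← finrank_top', ← hx, adjoin.finrank hint]
  exact Polynomial.natDegree_le_of_dvd (minpoly.dvd E x hpx) hp

end FixedField

section FractionField

open MvPolynomial

variable {ι K F : Type*} [Field K] [Field F] [Algebra (MvPolynomial ι K) F]
  [IsFractionRing (MvPolynomial ι K) F]

theorem adjoin_range_algebraMap_X_eq_top [Algebra K F] [IsScalarTower K (MvPolynomial ι K) F] :
    adjoin K (Set.range fun i => algebraMap (MvPolynomial ι K) F (X i)) = ⊤ := by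
  have hpoly (p : MvPolynomial ι K) : algebraMap _ F p ∈
      adjoin K (Set.range fun i => algebraMap (MvPolynomial ι K) F (X i)) := by
    induction p using MvPolynomial.induction_on with
    | C c =>
      rw [← MvPolynomial.algebraMap_eq, ← IsScalarTower.algebraMap_apply]
      exact IntermediateField.algebraMap_mem _ c
    | add p q hp hq => rw [map_add]; exact add_mem hp hq
    | mul_X p i hp => rw [map_mul]; exact mul_mem hp (subset_adjoin _ _ ⟨i, rfl⟩)
  refine eq_top_iff.2 fun f _ => ?_
  obtain ⟨p, q, -, rfl⟩ := IsFractionRing.div_surjective (A := MvPolynomial ι K) f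
  exact div_mem (hpoly p) (hpoly q)

theorem algebraMap_ne_zero_of_eval_ne_zero {p : MvPolynomial ι K} (f : ι → K)
    (h : eval f p ≠ 0) : algebraMap (MvPolynomial ι K) F p ≠ 0 :=
  (map_ne_zero_iff _ (IsFractionRing.injective _ F)).2 fun hp => h (by rw [hp, map_zero])

end FractionField

section TwistedAutomorphism

variable {K F : Type*} [Field K] [Field F] [Algebra K F] {b : K} {x y : F}

theorem orderOf_twisted_eq_three (σ : F ≃ₐ[K] F) (hσx : σ x = y)
    (hσy : σ y = algebraMap K F b / (x * y)) (hgen : adjoin K {x, y} = ⊤) (hb : b ≠ 0)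
    (hx : x ≠ 0) (hy : y ≠ 0) (hxy : x ≠ y) : orderOf σ = 3 := by
  have hb' : algebraMap K F b ≠ 0 := (map_ne_zero _).2 hb
  have hσz : σ (algebraMap K F b / (x * y)) = x := by
    rw [map_div₀, map_mul, AlgEquiv.commutes, hσx, hσy]
    field_simp
  have hσ3 : σ ^ 3 = 1 := by
    refine AlgEquiv.eq_one_of_adjoin_eq_top hgen _ ?_
    rintro a (rfl | rfl) <;> simp only [pow_three, AlgEquiv.mul_apply, hσx, hσy, hσz]
  have : Fact (Nat.Prime 3) := ⟨Nat.prime_three⟩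
  exact orderOf_eq_prime hσ3 fun h => hxy (by rw [← hσx, h, AlgEquiv.one_apply])

theorem adjoin_twisted_le_fixedField (σ : F ≃ₐ[K] F) (hσx : σ x = y)
    (hσy : σ y = algebraMap K F b / (x * y)) (hb : b ≠ 0) (hx : x ≠ 0) (hy : y ≠ 0) :
    adjoin K {twistedU (algebraMap K F b) x y, twistedV (algebraMap K F b) x y}
      ≤ fixedField (Subgroup.zpowers σ) := by
  have hz : algebraMap K F b / (x * y) ≠ 0 :=
    div_ne_zero ((map_ne_zero _).2 hb) (mul_ne_zero hx hy)
  have hxyz : x * y * (algebraMap K F b / (x * y)) = algebraMap K F b := by field_simp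
  rw [adjoin_le_iff]
  rintro a (rfl | rfl) <;> rw [SetLike.mem_coe, mem_fixedField_zpowers_iff]
  · rw [map_twistedU, AlgEquiv.commutes, hσx, hσy, twistedU_rotate hxyz hx hz]
  · rw [map_twistedV, AlgEquiv.commutes, hσx, hσy, twistedV_rotate hxyz hx hz]

theorem adjoin_adjoin_twisted_x_eq_top (hgen : adjoin K {x, y} = ⊤)
    (hD : twistedDen (algebraMap K F b) x y ≠ 0) (hux : twistedU (algebraMap K F b) x y ≠ x) :
    adjoin (adjoin K {twistedU (algebraMap K F b) x y, twistedV (algebraMap K F b) x y}) {x}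
      = ⊤ := by
  set u := twistedU (algebraMap K F b) x y
  set v := twistedV (algebraMap K F b) x y
  set L := adjoin K ({u, v} ∪ {x})
  have hu : u ∈ L := subset_adjoin K _ (by simp)
  have hv : v ∈ L := subset_adjoin K _ (by simp)
  have hx : x ∈ L := subset_adjoin K _ (by simp)
  have hy : y = (u ^ 2 - u * v + v ^ 2 - x * v) / (u - x) := by
    have hW := twistedW_eq hD
    rw [twistedW] at hW
    rw [eq_div_iff (sub_ne_zero.2 hux)]
    linear_combination -hW
  rw [← restrictScalars_eq_top_iff (K := K), adjoin_adjoin_left, eq_top_iff, ← hgen,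
    adjoin_le_iff]
  rintro a (rfl | rfl)
  · exact hx
  · rw [hy]
    exact div_mem (sub_mem (add_mem (sub_mem (pow_mem hu 2) (mul_mem hu hv)) (pow_mem hv 2))
      (mul_mem hx hv)) (sub_mem hu hx)

open Polynomial in
theorem exists_twisted_cubic (hb : b ≠ 0) (hx : x ≠ 0) (hy : y ≠ 0)
    (hD : twistedDen (algebraMap K F b) x y ≠ 0) (hu : twistedU (algebraMap K F b) x y ≠ 0)
    (hv : twistedV (algebraMap K F b) x y ≠ 0) :
    ∃ p : (adjoin K {twistedU (algebraMap K F b) x y, twistedV (algebraMap K F b) x y})[X],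
      p ≠ 0 ∧ aeval x p = 0 ∧ p.natDegree ≤ 3 := by
  set E := adjoin K {twistedU (algebraMap K F b) x y, twistedV (algebraMap K F b) x y}
  set U : E := ⟨twistedU (algebraMap K F b) x y, subset_adjoin K _ (by simp)⟩
  set V : E := ⟨twistedV (algebraMap K F b) x y, subset_adjoin K _ (by simp)⟩
  refine ⟨X * (C (U ^ 2 - U * V + V ^ 2) - C V * X) * (C (U ^ 2 - U * V + V ^ 2) - C U * X)
    - C (algebraMap K E b) * (C U - X) * (C V - X), ?_, ?_, by compute_degree⟩
  · have hU : U ≠ 0 := fun h => hu (congrArg Subtype.val h)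
    have hV : V ≠ 0 := fun h => hv (congrArg Subtype.val h)
    refine ne_of_apply_ne (eval 0) ?_
    simp [hb, hU, hV]
  · have hcubic := twisted_cubic hx hy ((_root_.map_ne_zero _).2 hb) hD
    rw [twistedW] at hcubic
    simp only [U, V, map_sub, map_mul, map_add, map_pow, aeval_X, aeval_C,
      IntermediateField.algebraMap_apply, coe_algebraMap_apply]
    linear_combination hcubic

end TwistedAutomorphism

section GenericPoint

open MvPolynomial

variable {K F : Type*} [Field K] [Field F] [Algebra K F] [Algebra (MvPolynomial (Fin 2) K) F]
  [IsScalarTower K (MvPolynomial (Fin 2) K) F] [IsFractionRing (MvPolynomial (Fin 2) K) F]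
  {b : K} {x y : F}

theorem twisted_nondegenerate_of_eq_algebraMap_X (hb : b ≠ 0)
    (hx : x = algebraMap (MvPolynomial (Fin 2) K) F (X 0))
    (hy : y = algebraMap (MvPolynomial (Fin 2) K) F (X 1)) :
    x ≠ 0 ∧ y ≠ 0 ∧ x ≠ y ∧ twistedDen (algebraMap K F b) x y ≠ 0 ∧
      twistedU (algebraMap K F b) x y ≠ 0 ∧ twistedV (algebraMap K F b) x y ≠ 0 ∧
      twistedU (algebraMap K F b) x y ≠ x := by
  have hne (p : MvPolynomial (Fin 2) K) (f : Fin 2 → K) (hp : eval f p ≠ 0) :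
      algebraMap (MvPolynomial (Fin 2) K) F p ≠ 0 :=
    algebraMap_ne_zero_of_eval_ne_zero f hp
  have hC : algebraMap (MvPolynomial (Fin 2) K) F (C b) = algebraMap K F b := by
    rw [← MvPolynomial.algebraMap_eq, ← IsScalarTower.algebraMap_apply]
  have hx0 : x ≠ 0 := hx ▸ hne _ ![1, 0] (by simp)
  have hy0 : y ≠ 0 := hy ▸ hne _ ![0, 1] (by simp)
  have hxy : x ≠ y := by
    have := hne (X 0 - X 1) ![1, 0] (by simp)
    rwa [map_sub, ← hx, ← hy, sub_ne_zero] at this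
  have hD : twistedDen (algebraMap K F b) x y ≠ 0 := by
    have := hne (twistedDen (C b) (X 0) (X 1)) 0 (by simp [twistedDen, hb])
    rwa [map_twistedDen, hC, ← hx, ← hy] at this
  have hNu : twistedNum (algebraMap K F b) x y ≠ 0 := by
    have := hne (twistedNum (C b) (X 0) (X 1)) ![0, 1] (by simp [twistedNum, hb])
    rwa [map_twistedNum, hC, ← hx, ← hy] at this
  have hNv : twistedNum (algebraMap K F b) y x ≠ 0 := by
    have := hne (twistedNum (C b) (X 1) (X 0)) ![1, 0] (by simp [twistedNum, hb])
    rwa [map_twistedNum, hC, ← hx, ← hy] at this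
  have hNux : twistedNum (algebraMap K F b) x y - x * twistedDen (algebraMap K F b) x y ≠ 0 := by
    have := hne (twistedNum (C b) (X 0) (X 1) - X 0 * twistedDen (C b) (X 0) (X 1)) ![0, 1]
      (by simp [twistedNum, twistedDen, hb])
    rwa [map_sub, map_mul, map_twistedNum, map_twistedDen, hC, ← hx, ← hy] at this
  refine ⟨hx0, hy0, hxy, hD, div_ne_zero hNu hD, div_ne_zero hNv hD, ?_⟩
  rw [twistedU, ne_eq, div_eq_iff hD]
  exact sub_ne_zero.1 hNux

end GenericPoint

open MvPolynomial

theorem fixed_field_twisted_C3 (K F : Type*) [Field K] [Field F]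
    [Algebra K F] [Algebra (MvPolynomial (Fin 2) K) F]
    [IsScalarTower K (MvPolynomial (Fin 2) K) F]
    [IsFractionRing (MvPolynomial (Fin 2) K) F]
    (b : K) (hb : b ≠ 0)
    (x y : F)
    (hx : x = algebraMap (MvPolynomial (Fin 2) K) F (X 0))
    (hy : y = algebraMap (MvPolynomial (Fin 2) K) F (X 1))
    (σ : F ≃ₐ[K] F)
    (hσx : σ x = y) (hσy : σ y = algebraMap K F b / (x * y)) :
    fixedField (Subgroup.zpowers σ) =
      adjoin K
        {y * (y ^ 3 * x ^ 3 + algebraMap K F b * x ^ 3 - 3 * (algebraMap K F b * y * x ^ 2)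
              + algebraMap K F b ^ 2) /
           (y ^ 2 * x ^ 4 - y ^ 3 * x ^ 3 + y ^ 4 * x ^ 2 - algebraMap K F b * y * x ^ 2
              - algebraMap K F b * y ^ 2 * x + algebraMap K F b ^ 2),
         x * (x ^ 3 * y ^ 3 + algebraMap K F b * y ^ 3 - 3 * (algebraMap K F b * x * y ^ 2)
              + algebraMap K F b ^ 2) /
           (y ^ 2 * x ^ 4 - y ^ 3 * x ^ 3 + y ^ 4 * x ^ 2 - algebraMap K F b * y * x ^ 2
              - algebraMap K F b * y ^ 2 * x + algebraMap K F b ^ 2)} := by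
  have hgen : adjoin K {x, y} = ⊤ := by
    rw [← adjoin_range_algebraMap_X_eq_top (ι := Fin 2)]
    congr 1
    ext
    simp [Fin.exists_fin_two, hx, hy, eq_comm]
  obtain ⟨hx0, hy0, hxy, hD, hu0, hv0, hux⟩ := twisted_nondegenerate_of_eq_algebraMap_X hb hx hy
  have hord := orderOf_twisted_eq_three σ hσx hσy hgen hb hx0 hy0 hxy
  obtain ⟨p, hp, hpx, hdeg⟩ := exists_twisted_cubic hb hx0 hy0 hD hu0 hv0
  refine (eq_of_le_of_adjoin_simple_eq_top (adjoin_twisted_le_fixedField σ hσx hσy hb hx0 hy0)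
    (adjoin_adjoin_twisted_x_eq_top hgen hD hux) hp hpx ?_).symm
  rwa [finrank_fixedField_zpowers σ (orderOf_pos_iff.1 (by omega)), hord]
end

section
/- Let K be a field of characteristic not 2 and let a, b, c ∈ K^×, ε₁, ε₂ ∈ {±1}. Let σ, τ be the K-automorphisms of K(x,y,z) with σ: x ↦ ε₁x, y ↦ ε₂y, z ↦ c/z and τ: x ↦ a/x, y ↦ b/y, z ↦ z. Then σ and τ are commuting involutions and the fixed field K(x,y,z)^⟨σ,τ⟩ is rational over K. Explicitly, setting t₁ = y(x² − a)/(x²y² − ab) and t₂ = x(y² − b)/(x²y² − ab), the fixed field is generated by u₃ = z + c/z together with u₁ = t₁ if ε₂ = 1 (resp. u₁ = t₁(z − c/z) if ε₂ = −1) and u₂ = t₂ if ε₁ = 1 (resp. u₂ = t₂(z − c/z) if ε₁ = −1). -/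
/-
`t₁ = inversionInvariant a b x y` and `t₂ = inversionInvariant b a y x` are fixed by
`τ : (x, y) ↦ (a/x, b/y)`, and `σ` multiplies them by `ε₂`, `ε₁`; the factor `z - c/z`, negated
by `σ`, makes the twisted ones `σ`-invariant. Hence `E = K(u₁, u₂, u₃)` lies in the fixed field
of `⟨σ, τ⟩`, which has index `4` by Artin's theorem. Conversely `z` is a root of `Z² - u₃ Z + c`
over `E`, so `t₁, t₂ ∈ E(z)`; `x` is a root of `t₂ X² + (b t₁² - 1 - a t₂²) X + a t₂` and
`y = b t₁ / (1 - t₂ x)`, so `F = E(z, x)` has degree at most `4` over `E`.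
-/

open IntermediateField

namespace Subgroup

variable {G : Type*} [Group G] {σ τ : G}

theorem coe_closure_pair_of_involutions (hσ : σ * σ = 1) (hτ : τ * τ = 1)
    (hστ : σ * τ = τ * σ) : (closure {σ, τ} : Set G) = {1, σ, τ, σ * τ} := by
  have hσσ (g : G) : σ * (σ * g) = g := by rw [← mul_assoc, hσ, one_mul]
  have hτσ (g : G) : τ * (σ * g) = σ * (τ * g) := by rw [← mul_assoc, ← hστ, mul_assoc]
  refine subset_antisymm (fun g hg => ?_) ?_
  · induction hg using closure_induction with
    | mem g hg => rcases hg with rfl | rfl <;> simp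
    | one => simp
    | mul g h _ _ hg hh =>
      simp only [Set.mem_insert_iff, Set.mem_singleton_iff] at hg hh ⊢
      rcases hg with hg | hg | hg | hg <;> rcases hh with hh | hh | hh | hh <;>
        simp [hg, hh, hσ, hτ, hσσ, hτσ, ← hστ, mul_assoc]
    | inv g _ hg =>
      simp only [Set.mem_insert_iff, Set.mem_singleton_iff] at hg ⊢
      rcases hg with hg | hg | hg | hg <;>
        simp [hg, inv_eq_of_mul_eq_one_right hσ, inv_eq_of_mul_eq_one_right hτ, hστ]
  · have hσ' : σ ∈ closure {σ, τ} := subset_closure (by simp)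
    have hτ' : τ ∈ closure {σ, τ} := subset_closure (by simp)
    simp [Set.insert_subset_iff, one_mem, hσ', hτ', mul_mem hσ' hτ']

theorem natCard_closure_pair_of_involutions (hσ : σ * σ = 1) (hτ : τ * τ = 1)
    (hστ : σ * τ = τ * σ) (hσ1 : σ ≠ 1) (hτ1 : τ ≠ 1) (hne : σ ≠ τ) :
    Nat.card (closure {σ, τ}) = 4 := by
  have hστ1 : σ * τ ≠ 1 :=
    fun h => hne (inv_eq_of_mul_eq_one_right hτ ▸ eq_inv_of_mul_eq_one_left h)
  rw [← SetLike.coe_sort_coe, Nat.card_coe_set_eq, coe_closure_pair_of_involutions hσ hτ hστ,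
    Set.ncard_insert_of_notMem (by simp [hσ1.symm, hτ1.symm, hστ1.symm]),
    Set.ncard_insert_of_notMem (by simp [hne, hτ1]), Set.ncard_pair (by simpa using hσ1)]

end Subgroup

theorem AlgEquiv.ext_of_adjoin_eq_top {K F : Type*} [Field K] [Field F] [Algebra K F] {s : Set F}
    (hs : adjoin K s = ⊤) {φ ψ : F ≃ₐ[K] F} (h : ∀ v ∈ s, φ v = ψ v) : φ = ψ := by
  ext v
  induction (hs ▸ mem_top : v ∈ adjoin K s) using adjoin_induction with
  | mem v hv => exact h v hv
  | algebraMap k => simp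
  | add v w _ _ hv hw => simp [hv, hw]
  | inv v _ hv => simp [hv]
  | mul v w _ _ hv hw => simp [hv, hw]

namespace IntermediateField

section FixedField

variable {K F : Type*} [Field K] [Field F] [Algebra K F]

theorem adjoin_le_fixedField_closure_iff {s : Set F} {S : Set (F ≃ₐ[K] F)} :
    adjoin K s ≤ fixedField (Subgroup.closure S) ↔ ∀ g ∈ S, ∀ u ∈ s, g u = u := by
  simp only [adjoin_le_iff, Set.subset_def, SetLike.mem_coe, mem_fixedField_iff]
  refine ⟨fun h g hg u hu => h u hu g (Subgroup.subset_closure hg), fun h u hu g hg => ?_⟩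
  exact (Subgroup.closure_le (MulAction.stabilizer _ u)).2 (fun g hg => h g hg u hu) hg

theorem finrank_fixedField_eq_natCard (H : Subgroup (F ≃ₐ[K] F)) [Finite H] :
    Module.finrank (fixedField H) F = Nat.card H := by
  have := Fintype.ofFinite H
  rw [Nat.card_eq_fintype_card]
  exact FixedPoints.finrank_eq_card H F

end FixedField

section Quadratic

variable {E L : Type*} [Field E] [Field L] [Algebra E L] {t : L} {p q : E}

open Polynomial in
theorem isIntegral_and_natDegree_minpoly_le_two
    (h : t ^ 2 + algebraMap E L p * t + algebraMap E L q = 0) :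
    IsIntegral E t ∧ (minpoly E t).natDegree ≤ 2 := by
  have hmonic : (X ^ 2 + C p * X + C q : E[X]).Monic := by monicity!
  have hroot : aeval t (X ^ 2 + C p * X + C q : E[X]) = 0 := by simpa using h
  refine ⟨⟨_, hmonic, hroot⟩, (natDegree_le_natDegree (minpoly.min E t hmonic hroot)).trans ?_⟩
  compute_degree

theorem finiteDimensional_adjoin_simple_and_finrank_le_two
    (h : t ^ 2 + algebraMap E L p * t + algebraMap E L q = 0) :
    FiniteDimensional E E⟮t⟯ ∧ Module.finrank E E⟮t⟯ ≤ 2 := by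
  obtain ⟨hint, hdeg⟩ := isIntegral_and_natDegree_minpoly_le_two h
  exact ⟨adjoin.finiteDimensional hint, adjoin.finrank hint ▸ hdeg⟩

theorem finiteDimensional_and_finrank_le_four_of_quadratic_tower {z x r s : L}
    (hz : z ^ 2 + algebraMap E L p * z + algebraMap E L q = 0)
    (hr : r ∈ E⟮z⟯) (hs : s ∈ E⟮z⟯) (hx : x ^ 2 + r * x + s = 0) (htop : E⟮z, x⟯ = ⊤) :
    FiniteDimensional E L ∧ Module.finrank E L ≤ 4 := by
  set M := E⟮z⟯
  have hxM : x ^ 2 + algebraMap M L ⟨r, hr⟩ * x + algebraMap M L ⟨s, hs⟩ = 0 := hx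
  have hMx : M⟮x⟯ = ⊤ := by
    rw [← restrictScalars_eq_top_iff (K := E), adjoin_simple_adjoin_simple, htop]
  obtain ⟨hEM, hEMrank⟩ := finiteDimensional_adjoin_simple_and_finrank_le_two hz
  obtain ⟨hML, hMLrank⟩ := finiteDimensional_adjoin_simple_and_finrank_le_two hxM
  rw [hMx] at hML hMLrank
  rw [finrank_top'] at hMLrank
  have : FiniteDimensional M L := Module.Finite.equiv (topEquiv (F := M) (E := L)).toLinearEquiv
  refine ⟨FiniteDimensional.trans E M L, ?_⟩
  calc Module.finrank E L = Module.finrank E M * Module.finrank M L :=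
        (Module.finrank_mul_finrank E M L).symm
    _ ≤ 2 * 2 := Nat.mul_le_mul hEMrank hMLrank

end Quadratic

end IntermediateField

namespace IsFractionRing

open MvPolynomial

variable {ι K F : Type*} [Field F]

section CommRing
variable [CommRing K] [Algebra (MvPolynomial ι K) F] [IsFractionRing (MvPolynomial ι K) F]

theorem algebraMap_ne_zero_of_constantCoeff_ne_zero {p : MvPolynomial ι K}
    (hp : constantCoeff p ≠ 0) : algebraMap _ F p ≠ 0 := by
  rw [map_ne_zero_iff _ (IsFractionRing.injective _ F)]
  rintro rfl
  simp at hp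

theorem algebraMap_X_ne_zero [Nontrivial K] (i : ι) :
    algebraMap (MvPolynomial ι K) F (X i) ≠ 0 := by
  rw [map_ne_zero_iff _ (IsFractionRing.injective _ F)]
  exact X_ne_zero i

variable [Algebra K F] [IsScalarTower K (MvPolynomial ι K) F]

theorem sq_sub_algebraMap_ne_zero (i : ι) {k : K} (hk : k ≠ 0) :
    algebraMap (MvPolynomial ι K) F (X i) ^ 2 - algebraMap K F k ≠ 0 := by
  rw [IsScalarTower.algebraMap_apply K (MvPolynomial ι K) F, algebraMap_eq, ← map_pow, ← map_sub]
  exact algebraMap_ne_zero_of_constantCoeff_ne_zero (by simpa using hk)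

theorem sq_mul_sq_sub_algebraMap_ne_zero (i j : ι) {k : K} (hk : k ≠ 0) :
    algebraMap (MvPolynomial ι K) F (X i) ^ 2 * algebraMap (MvPolynomial ι K) F (X j) ^ 2 -
      algebraMap K F k ≠ 0 := by
  rw [IsScalarTower.algebraMap_apply K (MvPolynomial ι K) F, algebraMap_eq, ← map_pow, ← map_pow,
    ← map_mul, ← map_sub]
  exact algebraMap_ne_zero_of_constantCoeff_ne_zero (by simpa using hk)

end CommRing

variable [Field K] [Algebra K F] [Algebra (MvPolynomial ι K) F]
  [IsScalarTower K (MvPolynomial ι K) F] [IsFractionRing (MvPolynomial ι K) F]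

theorem adjoin_range_X_eq_top :
    adjoin K (Set.range fun i => algebraMap (MvPolynomial ι K) F (X i)) = ⊤ := by
  have hpoly (p : MvPolynomial ι K) :
      algebraMap _ F p ∈ adjoin K (Set.range fun i => algebraMap (MvPolynomial ι K) F (X i)) := by
    induction p using MvPolynomial.induction_on with
    | C k =>
      rw [← algebraMap_eq, ← IsScalarTower.algebraMap_apply]
      exact IntermediateField.algebraMap_mem _ k
    | add p q hp hq => rw [map_add]; exact add_mem hp hq
    | mul_X p i hp => rw [map_mul]; exact mul_mem hp (subset_adjoin _ _ ⟨i, rfl⟩)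
  refine eq_top_iff.2 fun v _ => ?_
  obtain ⟨p, q, -, rfl⟩ := div_surjective (A := MvPolynomial ι K) v
  exact div_mem (hpoly p) (hpoly q)

end IsFractionRing

theorem div_ne_self_of_sq_sub_ne_zero {F : Type*} [Field F] {k v : F} (hv : v ≠ 0)
    (h : v ^ 2 - k ≠ 0) : k / v ≠ v := by
  intro h'
  rw [div_eq_iff hv] at h'
  exact h (by rw [h', sq, sub_self])

section InversionInvariant

variable {F : Type*} [Field F]

def inversionInvariant (a b x y : F) : F := y * (x ^ 2 - a) / (x ^ 2 * y ^ 2 - a * b)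

theorem map_inversionInvariant {L G : Type*} [Field L] [FunLike G F L] [RingHomClass G F L]
    (f : G) (a b x y : F) :
    f (inversionInvariant a b x y) = inversionInvariant (f a) (f b) (f x) (f y) := by
  simp [inversionInvariant]

theorem inversionInvariant_swap (a b x y : F) :
    inversionInvariant b a y x = x * (y ^ 2 - b) / (x ^ 2 * y ^ 2 - a * b) := by
  rw [inversionInvariant, mul_comm (y ^ 2), mul_comm b]

variable {a b x y : F}

theorem inversionInvariant_mul_mul {e f : F} (he : e ^ 2 = 1) (hf : f ^ 2 = 1) :
    inversionInvariant a b (e * x) (f * y) = f * inversionInvariant a b x y := by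
  simp only [inversionInvariant, mul_pow, he, hf, one_mul]
  ring

theorem inversionInvariant_div_div (ha : a ≠ 0) (hb : b ≠ 0) (hx : x ≠ 0) (hy : y ≠ 0)
    (hD : x ^ 2 * y ^ 2 - a * b ≠ 0) :
    inversionInvariant a b (a / x) (b / y) = inversionInvariant a b x y := by
  unfold inversionInvariant
  rw [show (a / x) ^ 2 * (b / y) ^ 2 - a * b = -(a * b * (x ^ 2 * y ^ 2 - a * b)) / (x ^ 2 * y ^ 2)
    by field_simp; ring]
  generalize x ^ 2 * y ^ 2 - a * b = d at *
  field_simp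
  ring

-- With `t₁ = inversionInvariant a b x y`, `t₂ = inversionInvariant b a y x`, the identity behind
-- it is `b t₁² - a t₂² = (b x² - a y²) / (x² y² - a b)`.
theorem sq_add_inversionInvariant_mul_add_eq_zero (hx : x ≠ 0) (hyb : y ^ 2 - b ≠ 0)
    (hD : x ^ 2 * y ^ 2 - a * b ≠ 0) :
    x ^ 2 + (b * inversionInvariant a b x y ^ 2 - 1 - a * inversionInvariant b a y x ^ 2) /
      inversionInvariant b a y x * x + a = 0 := by
  rw [inversionInvariant_swap a b x y, inversionInvariant]
  generalize hd : x ^ 2 * y ^ 2 - a * b = d at *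
  field_simp
  rw [← hd]
  ring

theorem mem_of_inversionInvariant_mem {S : Type*} [SetLike S F] [SubfieldClass S F] {L : S}
    (hbL : b ∈ L) (hxL : x ∈ L) (ht₁ : inversionInvariant a b x y ∈ L)
    (ht₂ : inversionInvariant b a y x ∈ L) (hb : b ≠ 0) (hxa : x ^ 2 - a ≠ 0)
    (hD : x ^ 2 * y ^ 2 - a * b ≠ 0) : y ∈ L := by
  have hsub : 1 - inversionInvariant b a y x * x = b * (x ^ 2 - a) / (x ^ 2 * y ^ 2 - a * b) := by
    rw [inversionInvariant_swap a b x y]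
    generalize hd : x ^ 2 * y ^ 2 - a * b = d at *
    field_simp
    rw [← hd]
    ring
  have hy : y = b * inversionInvariant a b x y / (1 - inversionInvariant b a y x * x) := by
    rw [hsub, inversionInvariant]
    generalize x ^ 2 * y ^ 2 - a * b = d at *
    field_simp
  rw [hy]
  exact div_mem (mul_mem hbL ht₁) (sub_mem (one_mem L) (mul_mem ht₂ hxL))

end InversionInvariant

section Twist

open Classical in
noncomputable def twist {K F : Type*} [One K] [Mul F] (ε : K) (t w : F) : F :=
  if ε = 1 then t else t * w

theorem map_twist {K F L G : Type*} [One K] [Mul F] [Mul L] [FunLike G F L] [MulHomClass G F L]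
    (f : G) (ε : K) (t w : F) : f (twist ε t w) = twist ε (f t) (f w) := by
  unfold twist
  split_ifs <;> simp

theorem twist_algebraMap_mul_neg {K F : Type*} [Field K] [Field F] [Algebra K F] {ε : K}
    (hε : ε = 1 ∨ ε = -1) (t w : F) : twist ε (algebraMap K F ε * t) (-w) = twist ε t w := by
  unfold twist
  split_ifs with h
  · rw [h, map_one, one_mul]
  · rw [hε.resolve_left h, map_neg, map_one]
    ring

theorem mem_of_twist_mem {K F S : Type*} [One K] [Field F] [SetLike S F] [SubfieldClass S F]
    {M : S} {ε : K} {t w : F} (h : twist ε t w ∈ M) (hw : w ∈ M) (hw0 : w ≠ 0) : t ∈ M := by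
  unfold twist at h
  split_ifs at h
  · exact h
  · simpa [hw0] using div_mem h hw

end Twist

section KleinFour

variable {K F : Type*} [Field K] [Field F] [Algebra K F]

theorem scaling_inversion_relations {φ ψ : F ≃ₐ[K] F} {e k : K} {v : F} (he : e * e = 1)
    (hk : k ≠ 0) (hv : v ≠ 0) (hφ : φ v = algebraMap K F e * v)
    (hψ : ψ v = algebraMap K F k / v) :
    φ (ψ v) = ψ (φ v) ∧ φ (φ v) = v ∧ ψ (ψ v) = v := by
  have he' : algebraMap K F e * algebraMap K F e = 1 := by rw [← map_mul, he, map_one]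
  have he0 : algebraMap K F e ≠ 0 := left_ne_zero_of_mul_eq_one he'
  have hk' : algebraMap K F k ≠ 0 := (map_ne_zero _).2 hk
  refine ⟨?_, ?_, ?_⟩
  · rw [hψ, map_div₀, φ.commutes, hφ, map_mul, ψ.commutes, hψ]
    field_simp
    linear_combination -he'
  · rw [hφ, map_mul, φ.commutes, hφ, ← mul_assoc, he', one_mul]
  · rw [hψ, map_div₀, ψ.commutes, hψ]
    field_simp

def kleinGenerators (a b c ε₁ ε₂ : K) (x y z : F) : Set F :=
  {twist ε₂ (inversionInvariant (algebraMap K F a) (algebraMap K F b) x y)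
      (z - algebraMap K F c / z),
    twist ε₁ (inversionInvariant (algebraMap K F b) (algebraMap K F a) y x)
      (z - algebraMap K F c / z),
    z + algebraMap K F c / z}

variable {a b c ε₁ ε₂ : K} {x y z : F} {σ τ : F ≃ₐ[K] F}

theorem commute_and_involutive_of_monomial_action (hgen : adjoin K {x, y, z} = ⊤)
    (ha : a ≠ 0) (hb : b ≠ 0) (hc : c ≠ 0) (hε₁ : ε₁ = 1 ∨ ε₁ = -1) (hε₂ : ε₂ = 1 ∨ ε₂ = -1)
    (hx : x ≠ 0) (hy : y ≠ 0) (hz : z ≠ 0)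
    (hσx : σ x = algebraMap K F ε₁ * x) (hσy : σ y = algebraMap K F ε₂ * y)
    (hσz : σ z = algebraMap K F c / z) (hτx : τ x = algebraMap K F a / x)
    (hτy : τ y = algebraMap K F b / y) (hτz : τ z = z) :
    σ * τ = τ * σ ∧ σ * σ = 1 ∧ τ * τ = 1 := by
  have hsq {ε : K} (hε : ε = 1 ∨ ε = -1) : ε * ε = 1 := by rcases hε with rfl | rfl <;> simp
  have hext {φ ψ : F ≃ₐ[K] F} (h₀ : φ x = ψ x) (h₁ : φ y = ψ y) (h₂ : φ z = ψ z) : φ = ψ :=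
    AlgEquiv.ext_of_adjoin_eq_top hgen (by simp [h₀, h₁, h₂])
  obtain ⟨hx₁, hx₂, hx₃⟩ := scaling_inversion_relations (hsq hε₁) ha hx hσx hτx
  obtain ⟨hy₁, hy₂, hy₃⟩ := scaling_inversion_relations (hsq hε₂) hb hy hσy hτy
  obtain ⟨hz₁, hz₂, hz₃⟩ :=
    scaling_inversion_relations (one_mul 1) hc hz (by rw [hτz, map_one, one_mul]) hσz
  exact ⟨hext hx₁ hy₁ hz₁.symm, hext hx₂ hy₂ hz₃, hext hx₃ hy₃ hz₂⟩

theorem natCard_closure_eq_four_of_monomial_action (hσσ : σ * σ = 1) (hττ : τ * τ = 1)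
    (hcomm : σ * τ = τ * σ) (hx : x ≠ 0) (hz : z ≠ 0) (hxa : x ^ 2 - algebraMap K F a ≠ 0)
    (hzc : z ^ 2 - algebraMap K F c ≠ 0) (hσz : σ z = algebraMap K F c / z)
    (hτx : τ x = algebraMap K F a / x) (hτz : τ z = z) :
    Nat.card (Subgroup.closure {σ, τ}) = 4 :=
  Subgroup.natCard_closure_pair_of_involutions hσσ hττ hcomm
    (fun h => div_ne_self_of_sq_sub_ne_zero hz hzc (by rw [← hσz, h, AlgEquiv.one_apply]))
    (fun h => div_ne_self_of_sq_sub_ne_zero hx hxa (by rw [← hτx, h, AlgEquiv.one_apply]))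
    (fun h => div_ne_self_of_sq_sub_ne_zero hz hzc (by rw [← hσz, h, hτz]))

theorem adjoin_kleinGenerators_le_fixedField (ha : a ≠ 0) (hb : b ≠ 0) (hc : c ≠ 0)
    (hε₁ : ε₁ = 1 ∨ ε₁ = -1) (hε₂ : ε₂ = 1 ∨ ε₂ = -1) (hx : x ≠ 0) (hy : y ≠ 0) (hz : z ≠ 0)
    (hD : x ^ 2 * y ^ 2 - algebraMap K F a * algebraMap K F b ≠ 0)
    (hσx : σ x = algebraMap K F ε₁ * x) (hσy : σ y = algebraMap K F ε₂ * y)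
    (hσz : σ z = algebraMap K F c / z) (hτx : τ x = algebraMap K F a / x)
    (hτy : τ y = algebraMap K F b / y) (hτz : τ z = z) :
    adjoin K (kleinGenerators a b c ε₁ ε₂ x y z) ≤ fixedField (Subgroup.closure {σ, τ}) := by
  have hsq {ε : K} (hε : ε = 1 ∨ ε = -1) : algebraMap K F ε ^ 2 = 1 := by
    rcases hε with rfl | rfl <;> simp
  have ha' : algebraMap K F a ≠ 0 := (map_ne_zero _).2 ha
  have hb' : algebraMap K F b ≠ 0 := (map_ne_zero _).2 hb
  have hc' : algebraMap K F c ≠ 0 := (map_ne_zero _).2 hc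
  have hD' : y ^ 2 * x ^ 2 - algebraMap K F b * algebraMap K F a ≠ 0 := by
    rwa [mul_comm, mul_comm (algebraMap K F b)]
  have hσw : σ (z - algebraMap K F c / z) = -(z - algebraMap K F c / z) := by
    rw [map_sub, map_div₀, σ.commutes, hσz]
    field_simp
    ring
  have hσu₃ : σ (z + algebraMap K F c / z) = z + algebraMap K F c / z := by
    rw [map_add, map_div₀, σ.commutes, hσz]
    field_simp
    ring
  have hτw : τ (z - algebraMap K F c / z) = z - algebraMap K F c / z := by
    rw [map_sub, map_div₀, τ.commutes, hτz]
  have hτu₃ : τ (z + algebraMap K F c / z) = z + algebraMap K F c / z := by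
    rw [map_add, map_div₀, τ.commutes, hτz]
  have hσt₁ := inversionInvariant_mul_mul (a := algebraMap K F a) (b := algebraMap K F b)
    (x := x) (y := y) (hsq hε₁) (hsq hε₂)
  have hσt₂ := inversionInvariant_mul_mul (a := algebraMap K F b) (b := algebraMap K F a)
    (x := y) (y := x) (hsq hε₂) (hsq hε₁)
  rw [adjoin_le_fixedField_closure_iff]
  simp only [kleinGenerators, Set.forall_mem_insert, Set.mem_singleton_iff, forall_eq,
    map_twist, map_inversionInvariant, AlgEquiv.commutes, hσx, hσy, hτx, hτy, hσw, hτw,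
    hσu₃, hτu₃, hσt₁, hσt₂, twist_algebraMap_mul_neg hε₁, twist_algebraMap_mul_neg hε₂,
    inversionInvariant_div_div ha' hb' hx hy hD, inversionInvariant_div_div hb' ha' hy hx hD']
  simp

theorem finiteDimensional_adjoin_kleinGenerators_and_finrank_le_four
    (hgen : adjoin K {x, y, z} = ⊤) (hb : b ≠ 0) (hx : x ≠ 0) (hz : z ≠ 0)
    (hxa : x ^ 2 - algebraMap K F a ≠ 0) (hyb : y ^ 2 - algebraMap K F b ≠ 0)
    (hzc : z ^ 2 - algebraMap K F c ≠ 0)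
    (hD : x ^ 2 * y ^ 2 - algebraMap K F a * algebraMap K F b ≠ 0) :
    FiniteDimensional (adjoin K (kleinGenerators a b c ε₁ ε₂ x y z)) F ∧
      Module.finrank (adjoin K (kleinGenerators a b c ε₁ ε₂ x y z)) F ≤ 4 := by
  set E := adjoin K (kleinGenerators a b c ε₁ ε₂ x y z)
  set A := algebraMap K F a
  set B := algebraMap K F b
  set C := algebraMap K F c
  set t₁ := inversionInvariant A B x y
  set t₂ := inversionInvariant B A y x
  have hEM {u : F} (hu : u ∈ E) : u ∈ E⟮z⟯ := IntermediateField.algebraMap_mem E⟮z⟯ ⟨u, hu⟩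
  have hzM : z ∈ E⟮z⟯ := mem_adjoin_simple_self E z
  have hwM : z - C / z ∈ E⟮z⟯ := sub_mem hzM (div_mem (hEM (E.algebraMap_mem c)) hzM)
  have hw0 : z - C / z ≠ 0 := sub_ne_zero.2 (div_ne_self_of_sq_sub_ne_zero hz hzc).symm
  have hu₁ := subset_adjoin K (kleinGenerators a b c ε₁ ε₂ x y z) (Set.mem_insert _ _)
  have hu₂ := subset_adjoin K (kleinGenerators a b c ε₁ ε₂ x y z)
    (Set.mem_insert_of_mem _ (Set.mem_insert _ _))
  have hu₃ : z + C / z ∈ E :=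
    subset_adjoin K _ (Set.mem_insert_of_mem _ (Set.mem_insert_of_mem _ rfl))
  have ht₁M : t₁ ∈ E⟮z⟯ := mem_of_twist_mem (hEM hu₁) hwM hw0
  have ht₂M : t₂ ∈ E⟮z⟯ := mem_of_twist_mem (hEM hu₂) hwM hw0
  have hAM : A ∈ E⟮z⟯ := hEM (E.algebraMap_mem a)
  have hBM : B ∈ E⟮z⟯ := hEM (E.algebraMap_mem b)
  refine finiteDimensional_and_finrank_le_four_of_quadratic_tower (p := -⟨z + C / z, hu₃⟩)
    (q := algebraMap K E c) ?_ (r := (B * t₁ ^ 2 - 1 - A * t₂ ^ 2) / t₂) (s := A)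
    (div_mem (sub_mem (sub_mem (mul_mem hBM (pow_mem ht₁M 2)) (one_mem _))
      (mul_mem hAM (pow_mem ht₂M 2))) ht₂M)
    hAM (sq_add_inversionInvariant_mul_add_eq_zero hx hyb hD) ?_
  · show z ^ 2 + -(z + C / z) * z + C = 0
    field_simp
    ring
  · have hM : E⟮z⟯ ≤ adjoin E {z, x} := adjoin_simple_le_iff.2 (subset_adjoin E _ (by simp))
    have hxL : x ∈ adjoin E {z, x} := subset_adjoin E _ (by simp)
    have hyL : y ∈ adjoin E {z, x} :=
      mem_of_inversionInvariant_mem (hM hBM) hxL (hM ht₁M) (hM ht₂M) ((map_ne_zero _).2 hb) hxa hD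
    rw [← restrictScalars_eq_top_iff (K := K), eq_top_iff, ← hgen, adjoin_le_iff]
    rintro u (rfl | rfl | rfl)
    exacts [hxL, hyL, hM hzM]

end KleinFour

open MvPolynomial

open Classical in
theorem fixed_field_th231_general (K F : Type*) [Field K] [Field F]
    [Algebra K F] [Algebra (MvPolynomial (Fin 3) K) F]
    [IsScalarTower K (MvPolynomial (Fin 3) K) F]
    [IsFractionRing (MvPolynomial (Fin 3) K) F]
    (a b c ε₁ ε₂ : K) (ha : a ≠ 0) (hb : b ≠ 0) (hc : c ≠ 0)
    (hε₁ : ε₁ = 1 ∨ ε₁ = -1) (hε₂ : ε₂ = 1 ∨ ε₂ = -1)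
    (x y z : F)
    (hx : x = algebraMap (MvPolynomial (Fin 3) K) F (X 0))
    (hy : y = algebraMap (MvPolynomial (Fin 3) K) F (X 1))
    (hz : z = algebraMap (MvPolynomial (Fin 3) K) F (X 2))
    (σ τ : F ≃ₐ[K] F)
    (hσx : σ x = algebraMap K F ε₁ * x)
    (hσy : σ y = algebraMap K F ε₂ * y)
    (hσz : σ z = algebraMap K F c / z)
    (hτx : τ x = algebraMap K F a / x)
    (hτy : τ y = algebraMap K F b / y)
    (hτz : τ z = z) :
    σ * τ = τ * σ ∧ σ * σ = 1 ∧ τ * τ = 1 ∧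
    fixedField (Subgroup.closure {σ, τ}) =
      adjoin K
        {(if ε₂ = 1 then
            y * (x ^ 2 - algebraMap K F a) / (x ^ 2 * y ^ 2 - algebraMap K F (a * b))
          else
            y * (x ^ 2 - algebraMap K F a) / (x ^ 2 * y ^ 2 - algebraMap K F (a * b)) *
              (z - algebraMap K F c / z)),
         (if ε₁ = 1 then
            x * (y ^ 2 - algebraMap K F b) / (x ^ 2 * y ^ 2 - algebraMap K F (a * b))
          else
            x * (y ^ 2 - algebraMap K F b) / (x ^ 2 * y ^ 2 - algebraMap K F (a * b)) *
              (z - algebraMap K F c / z)),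
         z + algebraMap K F c / z} := by
  have hgen : adjoin K {x, y, z} = ⊤ := by
    rw [← IsFractionRing.adjoin_range_X_eq_top (ι := Fin 3) (K := K) (F := F)]
    congr 1
    ext v
    simp [Fin.exists_fin_succ, hx, hy, hz, eq_comm]
  have hx0 : x ≠ 0 := hx ▸ IsFractionRing.algebraMap_X_ne_zero 0
  have hy0 : y ≠ 0 := hy ▸ IsFractionRing.algebraMap_X_ne_zero 1
  have hz0 : z ≠ 0 := hz ▸ IsFractionRing.algebraMap_X_ne_zero 2
  have hxa : x ^ 2 - algebraMap K F a ≠ 0 := hx ▸ IsFractionRing.sq_sub_algebraMap_ne_zero 0 ha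
  have hyb : y ^ 2 - algebraMap K F b ≠ 0 := hy ▸ IsFractionRing.sq_sub_algebraMap_ne_zero 1 hb
  have hzc : z ^ 2 - algebraMap K F c ≠ 0 := hz ▸ IsFractionRing.sq_sub_algebraMap_ne_zero 2 hc
  have hD : x ^ 2 * y ^ 2 - algebraMap K F a * algebraMap K F b ≠ 0 := by
    rw [← map_mul, hx, hy]
    exact IsFractionRing.sq_mul_sq_sub_algebraMap_ne_zero 0 1 (mul_ne_zero ha hb)
  obtain ⟨hcomm, hσσ, hττ⟩ := commute_and_involutive_of_monomial_action hgen ha hb hc hε₁ hε₂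
    hx0 hy0 hz0 hσx hσy hσz hτx hτy hτz
  have hcard :=
    natCard_closure_eq_four_of_monomial_action hσσ hττ hcomm hx0 hz0 hxa hzc hσz hτx hτz
  have : Finite (Subgroup.closure {σ, τ}) := Nat.finite_of_card_ne_zero (by rw [hcard]; norm_num)
  have hle := adjoin_kleinGenerators_le_fixedField (ε₁ := ε₁) (ε₂ := ε₂)
    ha hb hc hε₁ hε₂ hx0 hy0 hz0 hD hσx hσy hσz hτx hτy hτz
  obtain ⟨_, hrank⟩ := finiteDimensional_adjoin_kleinGenerators_and_finrank_le_four
    (c := c) (ε₁ := ε₁) (ε₂ := ε₂) hgen hb hx0 hz0 hxa hyb hzc hD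
  refine ⟨hcomm, hσσ, hττ, ?_⟩
  rw [map_mul, ← inversionInvariant_swap (algebraMap K F a) (algebraMap K F b) x y]
  exact (eq_of_le_of_finrank_le' hle (by rwa [finrank_fixedField_eq_natCard, hcard])).symm

open Classical in
theorem fixed_field_th231 (K F : Type*) [Field K] [Field F]
    [Algebra K F] [Algebra (MvPolynomial (Fin 3) K) F]
    [IsScalarTower K (MvPolynomial (Fin 3) K) F]
    [IsFractionRing (MvPolynomial (Fin 3) K) F]
    (h2 : (2 : K) ≠ 0)
    (a b c ε₁ ε₂ : K) (ha : a ≠ 0) (hb : b ≠ 0) (hc : c ≠ 0)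
    (hε₁ : ε₁ = 1 ∨ ε₁ = -1) (hε₂ : ε₂ = 1 ∨ ε₂ = -1)
    (x y z : F)
    (hx : x = algebraMap (MvPolynomial (Fin 3) K) F (X 0))
    (hy : y = algebraMap (MvPolynomial (Fin 3) K) F (X 1))
    (hz : z = algebraMap (MvPolynomial (Fin 3) K) F (X 2))
    (σ τ : F ≃ₐ[K] F)
    (hσx : σ x = algebraMap K F ε₁ * x)
    (hσy : σ y = algebraMap K F ε₂ * y)
    (hσz : σ z = algebraMap K F c / z)
    (hτx : τ x = algebraMap K F a / x)
    (hτy : τ y = algebraMap K F b / y)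
    (hτz : τ z = z) :
    σ * τ = τ * σ ∧ σ * σ = 1 ∧ τ * τ = 1 ∧
    fixedField (Subgroup.closure {σ, τ}) =
      adjoin K
        {(if ε₂ = 1 then
            y * (x ^ 2 - algebraMap K F a) / (x ^ 2 * y ^ 2 - algebraMap K F (a * b))
          else
            y * (x ^ 2 - algebraMap K F a) / (x ^ 2 * y ^ 2 - algebraMap K F (a * b)) *
              (z - algebraMap K F c / z)),
         (if ε₁ = 1 then
            x * (y ^ 2 - algebraMap K F b) / (x ^ 2 * y ^ 2 - algebraMap K F (a * b))
          else
            x * (y ^ 2 - algebraMap K F b) / (x ^ 2 * y ^ 2 - algebraMap K F (a * b)) *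
              (z - algebraMap K F c / z)),
         z + algebraMap K F c / z} :=
  fixed_field_th231_general K F a b c ε₁ ε₂ ha hb hc hε₁ hε₂ x y z hx hy hz σ τ hσx hσy hσz hτx hτy
    hτz
end
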